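/- If C is a nontrivial group and f: C → A, g: C → B are injective group homomorphisms, then the amalgamated free product A *_C B is a nontrivial group. -/

import Mathlib

/-- If `C` is nontrivial and both structure maps are injective, then the amalgamated free
product `A *_C B` is a nontrivial group. -/
theorem amalgamated_product_nontrivial (C : Type) [Group C] [Nontrivial C]
    (G : Bool → Type) [∀ i, Group (G i)] (φ : ∀ i, C →* G i)
    (hφ : ∀ i, Function.Injective (φ i)) :
    Nontrivial (Monoid.PushoutI φ) :=
  (Monoid.PushoutI.base_injective hφ).nontrivial
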